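/- arXiv:1807.00112 — 2 statements merged into one kernel-verified Lean document; each statement's English description precedes it below -/
import Mathlib

section
/- Under the surrogate approximation hypotheses, if v minimizes the surrogate distance to y among subtree leaves and the true nearest neighbor x* lies in a different leaf u, and additionally ‖y − x*‖ > 2^ℓ/4 where ℓ = max(ℓ(v), ℓ(u)), then every z ∈ C(v) satisfies ‖y − z‖ ≤ (1 + 16ε)·‖y − x*‖. -/
/-- If v minimizes the surrogate distance to y (so ‖y−s(v)‖ ≤ ‖y−s(u)‖), the
surrogate/center approximations hold at scale 2^ℓ·ε with ℓ = max(ℓ(v), ℓ(u)), and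
‖y − x*‖ > 2^ℓ/4, then every z ∈ C(v) satisfies ‖y−z‖ ≤ (1+16ε)·‖y−x*‖. -/
theorem stmt5 {d : ℕ} (y xstar z xcu xcv su sv : EuclideanSpace ℝ (Fin d))
    (ℓv ℓu : ℤ) (ε : ℝ) (hε0 : 0 < ε) (hε : ε < 1 / 6)
    (ℓ : ℤ) (hℓ : ℓ = max ℓv ℓu)
    (hmin : ‖y - sv‖ ≤ ‖y - su‖)
    (hxu : ‖xstar - xcu‖ ≤ (2 : ℝ) ^ ℓ * ε)
    (hsu : ‖xcu - su‖ ≤ (2 : ℝ) ^ ℓ * ε)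
    (hsv : ‖xcv - sv‖ ≤ (2 : ℝ) ^ ℓ * ε)
    (hz : ‖xcv - z‖ ≤ (2 : ℝ) ^ ℓ * ε)
    (hy : (2 : ℝ) ^ ℓ / 4 < ‖y - xstar‖) :
    ‖y - z‖ ≤ (1 + 16 * ε) * ‖y - xstar‖ := by
  have h1 : ‖y - z‖ ≤ ‖y - sv‖ + ‖sv - xcv‖ + ‖xcv - z‖ :=
    norm_sub_le_norm_sub_add_norm_sub _ _ _ |>.trans
      (by gcongr; exact norm_sub_le_norm_sub_add_norm_sub _ _ _)
  have h2 : ‖y - su‖ ≤ ‖y - xstar‖ + ‖xstar - xcu‖ + ‖xcu - su‖ :=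
    norm_sub_le_norm_sub_add_norm_sub _ _ _ |>.trans
      (by gcongr; exact norm_sub_le_norm_sub_add_norm_sub _ _ _)
  have hsv' : ‖sv - xcv‖ ≤ (2 : ℝ) ^ ℓ * ε := by rwa [norm_sub_rev]
  have key : ‖y - z‖ ≤ ‖y - xstar‖ + 4 * ((2 : ℝ) ^ ℓ * ε) := by
    calc ‖y - z‖ ≤ ‖y - sv‖ + ‖sv - xcv‖ + ‖xcv - z‖ := h1
      _ ≤ ‖y - su‖ + ((2:ℝ)^ℓ*ε) + ((2:ℝ)^ℓ*ε) := by gcongr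
      _ ≤ (‖y - xstar‖ + ‖xstar - xcu‖ + ‖xcu - su‖) + ((2:ℝ)^ℓ*ε) + ((2:ℝ)^ℓ*ε) := by gcongr
      _ ≤ (‖y - xstar‖ + ((2:ℝ)^ℓ*ε) + ((2:ℝ)^ℓ*ε)) + ((2:ℝ)^ℓ*ε) + ((2:ℝ)^ℓ*ε) := by gcongr
      _ = ‖y - xstar‖ + 4 * ((2 : ℝ) ^ ℓ * ε) := by ring
  have h4 : 4 * ((2 : ℝ) ^ ℓ * ε) ≤ 16 * ε * ‖y - xstar‖ := by
    nlinarith [hy, hε0]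
  linarith
end

section
/- Quadtree surrogate comparison: let ε ∈ (0, 1], suppose ‖x* − c_v‖ ≥ 8ε^{-1}·2^ℓ·√d, ‖x* − c_u‖ ≤ 2^ℓ√d, ‖c_u − s_u‖ ≤ 2^ℓ√d, ‖c_v − s_v‖ ≤ 2^ℓ√d, and ‖y − x*‖ ≤ ε^{-1}·2^ℓ·√d. Then ‖y − s_u‖ ≤ (ε^{-1} + 2)·2^ℓ√d < ‖y − s_v‖. -/
section PseudoMetricSpace

variable {X : Type*} [PseudoMetricSpace X] {y x c s : X} {K r : ℝ}

theorem dist_le_add_two_mul_of_dist_le (hy : dist y x ≤ K * r)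
    (hx : dist x c ≤ r) (hs : dist c s ≤ r) : dist y s ≤ (K + 2) * r := by
  linarith [dist_triangle4 y x c s]

theorem sub_sub_one_mul_le_dist {L : ℝ} (hsep : L * r ≤ dist x c)
    (hy : dist y x ≤ K * r) (hs : dist c s ≤ r) : (L - K - 1) * r ≤ dist y s := by
  have := dist_triangle4 x y s c
  rw [dist_comm x y, dist_comm s c] at this
  linarith

end PseudoMetricSpace

/-- Quadtree surrogate comparison: under the stated separation and approximation
hypotheses with ε ∈ (0,1], ‖y − s_u‖ ≤ (ε⁻¹ + 2)·2^ℓ√d < ‖y − s_v‖. -/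
theorem stmt16 {d : ℕ} (hd : 1 ≤ d) (y xstar cu cv su sv : EuclideanSpace ℝ (Fin d))
    (ℓ : ℤ) (ε : ℝ) (hε0 : 0 < ε) (hε : ε ≤ 1)
    (hsep : 8 * ε⁻¹ * (2 : ℝ) ^ ℓ * Real.sqrt d ≤ ‖xstar - cv‖)
    (hu : ‖xstar - cu‖ ≤ (2 : ℝ) ^ ℓ * Real.sqrt d)
    (hsu : ‖cu - su‖ ≤ (2 : ℝ) ^ ℓ * Real.sqrt d)
    (hsv : ‖cv - sv‖ ≤ (2 : ℝ) ^ ℓ * Real.sqrt d)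
    (hy : ‖y - xstar‖ ≤ ε⁻¹ * (2 : ℝ) ^ ℓ * Real.sqrt d) :
    ‖y - su‖ ≤ (ε⁻¹ + 2) * (2 : ℝ) ^ ℓ * Real.sqrt d ∧
    (ε⁻¹ + 2) * (2 : ℝ) ^ ℓ * Real.sqrt d < ‖y - sv‖ := by
  simp only [← dist_eq_norm, mul_assoc] at *
  set r := (2 : ℝ) ^ ℓ * Real.sqrt d
  have hr : 0 < r := by positivity
  have hεinv : 1 ≤ ε⁻¹ := (one_le_inv₀ hε0).mpr hε
  refine ⟨dist_le_add_two_mul_of_dist_le hy hu hsu, ?_⟩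
  calc (ε⁻¹ + 2) * r < (8 * ε⁻¹ - ε⁻¹ - 1) * r := by gcongr; linarith
    _ ≤ dist y sv := sub_sub_one_mul_le_dist (by linarith) hy hsv
end
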